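/- arXiv:2305.14545 — 5 statements merged into one kernel-verified Lean document; each statement's English description precedes it below -/
import Mathlib

section
/- For every p ∈ (0,∞) and all n₁, n₂ ∈ ℕ, the contraction coefficients of a finitely generated self-similar group satisfy η_{p, n₁+n₂} ≤ η_{p,n₁} · η_{p,n₂}, an inequality of values in [0,∞]. (Lemma 4.1 of the paper.) -/
open Filter Topology
open scoped ENNReal NNReal

/-- A self-similar group: a group `G` acting on the set of finite words `List X`
by length-preserving bijections, together with a section (restriction) map. -/
structure SelfSimilarGroup (X : Type*) (G : Type*) [Group G] where
  act : G → List X → List X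
  sec : G → List X → G
  length_act : ∀ g v, (act g v).length = v.length
  act_append : ∀ g v w, act g (v ++ w) = act g v ++ act (sec g v) w
  sec_append : ∀ g v w, sec g (v ++ w) = sec (sec g v) w
  act_one : ∀ v, act 1 v = v
  sec_one : ∀ v, sec 1 v = 1
  act_mul : ∀ g h v, act (g * h) v = act g (act h v)
  sec_mul : ∀ g h v, sec (g * h) v = sec g (act h v) * sec h v

/-- Word length with respect to a finite generating set `S`. -/
noncomputable def wordLength {G : Type*} [Group G] (S : Finset G) (g : G) : ℕ :=
  sInf {n | ∃ w : List G, (∀ s ∈ w, s ∈ S) ∧ w.length = n ∧ w.prod = g}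

/-- The contraction coefficient `η_{p,n} ∈ [0,∞]`: the limsup of
`(Σ_{v ∈ X^n} l(g|_v)^p)^{1/p} / l(g)` as `l(g) → ∞` (along the filter generated by
the sets `{g : l(g) ≥ m}`).  Words of length `n` are encoded as functions `Fin n → X`. -/
noncomputable def eta {X G : Type*} [Fintype X] [Group G]
    (A : SelfSimilarGroup X G) (S : Finset G) (p : ℝ) (n : ℕ) : ℝ≥0∞ :=
  Filter.limsup
    (fun g : G =>
      (∑ f : Fin n → X, (wordLength S (A.sec g (List.ofFn f)) : ℝ≥0∞) ^ p) ^ (1 / p)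
        / (wordLength S g : ℝ≥0∞))
    (Filter.comap (wordLength S) Filter.atTop)

/-- `N` is the nucleus of a contracting self-similar group: a finite subset containing `1`,
closed under sections, absorbing all sections of every element at deep enough levels. -/
def SelfSimilarGroup.IsNucleus {X G : Type*} [Group G]
    (A : SelfSimilarGroup X G) (N : Finset G) : Prop :=
  (1 : G) ∈ N ∧ (∀ g ∈ N, ∀ v : List X, A.sec g v ∈ N) ∧
    ∀ g : G, ∃ n₀ : ℕ, ∀ v : List X, n₀ ≤ v.length → A.sec g v ∈ N

/-!
Write `T_n(g) = Σ_{|v| = n} l(g|_v)^p`, so that `η_{p,n}^p = limsup T_n(g) / l(g)^p` and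
`T_{n₁+n₂}(g) = Σ_{|u| = n₁} T_{n₂}(g|_u)`. Sections at level `n` of a product of `l` generators
have length at most `K_n · l`, so `T_n(g) ≤ C_n · l(g)^p`; in particular every `η_{p,n}` is
finite. Given `b > η_{p,n₂}^p`, the bound `T_{n₂}(h) ≤ b · l(h)^p` holds once `l(h)` is large,
and `T_{n₂}` is bounded on the remaining short elements, so `T_{n₂}(h) ≤ b · l(h)^p + D` for all
`h`. Summing over `u` gives `T_{n₁+n₂}(g) ≤ b · T_{n₁}(g) + D'`, whose constant vanishes after
division by `l(g)^p → ∞`. Since `η_{p,n₁}^p` is finite, letting `b` decrease to `η_{p,n₂}^p`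
and taking `p`-th roots gives the claim.
-/

section WordLength

variable {G : Type*} [Group G] (S : Finset G)

lemma wordLength_spec (hgen : Subgroup.closure (S : Set G) = ⊤) (hsym : ∀ s ∈ S, s⁻¹ ∈ S)
    (g : G) : ∃ w : List G, (∀ s ∈ w, s ∈ S) ∧ w.length = wordLength S g ∧ w.prod = g := by
  have hmem : g ∈ (Subgroup.closure (S : Set G)).toSubmonoid := by
    rw [hgen]; trivial
  rw [Subgroup.closure_toSubmonoid] at hmem
  obtain ⟨l, hl, hprod⟩ := Submonoid.exists_list_of_mem_closure hmem
  refine Nat.sInf_mem (s := {n | ∃ w : List G, (∀ s ∈ w, s ∈ S) ∧ w.length = n ∧ w.prod = g})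
    ⟨l.length, l, fun s hs => ?_, rfl, hprod⟩
  rcases hl s hs with h | h
  · exact h
  · simpa using hsym s⁻¹ h

lemma wordLength_one : wordLength S (1 : G) = 0 :=
  Nat.sInf_eq_zero.mpr (Or.inl ⟨[], by simp⟩)

lemma wordLength_mul_le (hgen : Subgroup.closure (S : Set G) = ⊤) (hsym : ∀ s ∈ S, s⁻¹ ∈ S)
    (g h : G) : wordLength S (g * h) ≤ wordLength S g + wordLength S h := by
  obtain ⟨w₁, hw₁, hlen₁, rfl⟩ := wordLength_spec S hgen hsym g
  obtain ⟨w₂, hw₂, hlen₂, rfl⟩ := wordLength_spec S hgen hsym h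
  refine Nat.sInf_le ⟨w₁ ++ w₂, fun s hs => ?_, by simp [hlen₁, hlen₂], List.prod_append⟩
  rcases List.mem_append.mp hs with h | h
  · exact hw₁ s h
  · exact hw₂ s h

end WordLength

lemma ENNReal.limsup_div_le_mul_limsup_div {α : Type*} {f : Filter α} {u v w : α → ℝ≥0∞}
    {b D : ℝ≥0∞} (hb : b ≠ ∞) (hD : D ≠ ∞) (hw : Tendsto w f (𝓝 ∞))
    (huv : ∀ x, u x ≤ b * v x + D) :
    limsup (fun x => u x / w x) f ≤ b * limsup (fun x => v x / w x) f := by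
  have hDw : Tendsto (fun x => D / w x) f (𝓝 0) := by
    simpa using ENNReal.Tendsto.const_div hw (Or.inr hD)
  calc limsup (fun x => u x / w x) f
      ≤ limsup ((fun x => b * (v x / w x)) + fun x => D / w x) f := by
        refine limsup_le_limsup (Eventually.of_forall fun x => ?_)
        rw [Pi.add_apply, ← mul_div_assoc, ← ENNReal.add_div]
        exact ENNReal.div_le_div_right (huv x) _
    _ = b * limsup (fun x => v x / w x) f := by
        rw [ENNReal.limsup_add_of_right_tendsto_zero hDw, ENNReal.limsup_const_mul_of_ne_top hb]

lemma ENNReal.le_mul_of_forall_lt_imp_le {x a c : ℝ≥0∞} (ha : a ≠ ∞) (hc : c ≠ ∞)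
    (h : ∀ b, c < b → b < ∞ → x ≤ a * b) : x ≤ a * c := by
  have : (𝓝[>] c).NeBot := nhdsGT_neBot_of_exists_gt ⟨∞, hc.lt_top⟩
  refine ge_of_tendsto ((ENNReal.continuousAt_const_mul (Or.inl ha)).tendsto.mono_left
    (nhdsWithin_le_nhds (s := Set.Ioi c))) ?_
  filter_upwards [self_mem_nhdsWithin, nhdsWithin_le_nhds (gt_mem_nhds hc.lt_top)] with b hcb hb
  exact h b hcb hb

lemma tendsto_natCast_rpow_comap_atTop {α : Type*} {p : ℝ} (hp : 0 < p) (L : α → ℕ) :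
    Tendsto (fun x => (L x : ℝ≥0∞) ^ p) (comap L atTop) (𝓝 ∞) :=
  (ENNReal.continuous_rpow_const.tendsto' ∞ ∞ (ENNReal.top_rpow_of_pos hp)).comp
    (ENNReal.tendsto_nat_nhds_top.comp tendsto_comap)

namespace SelfSimilarGroup

variable {X G : Type*} [Group G] (A : SelfSimilarGroup X G) (S : Finset G)

lemma wordLength_sec_le_mul (hgen : Subgroup.closure (S : Set G) = ⊤)
    (hsym : ∀ s ∈ S, s⁻¹ ∈ S) {n K : ℕ}
    (hK : ∀ s ∈ S, ∀ v : List X, v.length = n → wordLength S (A.sec s v) ≤ K)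
    (g : G) (v : List X) (hv : v.length = n) :
    wordLength S (A.sec g v) ≤ K * wordLength S g := by
  obtain ⟨w, hw, hlen, rfl⟩ := wordLength_spec S hgen hsym g
  rw [← hlen]
  clear hlen
  induction w generalizing v with
  | nil => simp [A.sec_one, wordLength_one]
  | cons s w ih =>
    rw [List.prod_cons, A.sec_mul, List.length_cons, mul_add_one, add_comm]
    refine (wordLength_mul_le S hgen hsym _ _).trans (add_le_add ?_ ?_)
    · exact hK s (hw s List.mem_cons_self) _ (by rw [A.length_act, hv])
    · exact ih v hv fun s hs => hw s (List.mem_cons_of_mem _ hs)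

lemma exists_wordLength_sec_le_mul [Finite X] (hgen : Subgroup.closure (S : Set G) = ⊤)
    (hsym : ∀ s ∈ S, s⁻¹ ∈ S) (n : ℕ) :
    ∃ K : ℕ, ∀ (g : G) (v : List X), v.length = n →
      wordLength S (A.sec g v) ≤ K * wordLength S g := by
  have : Fintype X := Fintype.ofFinite X
  classical
  refine ⟨(S ×ˢ (Finset.univ : Finset (Fin n → X))).sup
    fun q => wordLength S (A.sec q.1 (List.ofFn q.2)), wordLength_sec_le_mul A S hgen hsym ?_⟩
  rintro s hs v rfl
  simpa [List.ofFn_get] using Finset.le_sup (b := (s, v.get))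
    (f := fun q : G × (Fin v.length → X) => wordLength S (A.sec q.1 (List.ofFn q.2)))
    (Finset.mem_product.mpr ⟨hs, Finset.mem_univ _⟩)

variable [Fintype X]

noncomputable def secLengthSum (p : ℝ) (n : ℕ) (g : G) : ℝ≥0∞ :=
  ∑ f : Fin n → X, (wordLength S (A.sec g (List.ofFn f)) : ℝ≥0∞) ^ p

lemma secLengthSum_add (p : ℝ) (n₁ n₂ : ℕ) (g : G) :
    A.secLengthSum S p (n₁ + n₂) g =
      ∑ f : Fin n₁ → X, A.secLengthSum S p n₂ (A.sec g (List.ofFn f)) := by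
  rw [secLengthSum, ← (Fin.appendEquiv n₁ n₂).sum_comp, Fintype.sum_prod_type]
  refine Finset.sum_congr rfl fun f₁ _ => Finset.sum_congr rfl fun f₂ _ => ?_
  rw [← A.sec_append, ← List.ofFn_fin_append]
  rfl

lemma exists_secLengthSum_le_mul (hgen : Subgroup.closure (S : Set G) = ⊤)
    (hsym : ∀ s ∈ S, s⁻¹ ∈ S) {p : ℝ} (hp : 0 ≤ p) (n : ℕ) :
    ∃ C ≠ ∞, ∀ g, A.secLengthSum S p n g ≤ C * (wordLength S g : ℝ≥0∞) ^ p := by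
  obtain ⟨K, hK⟩ := A.exists_wordLength_sec_le_mul S hgen hsym n
  refine ⟨Fintype.card (Fin n → X) * (K : ℝ≥0∞) ^ p, by finiteness, fun g => ?_⟩
  calc A.secLengthSum S p n g
      ≤ ∑ _f : Fin n → X, ((K : ℝ≥0∞) * wordLength S g) ^ p := by
        refine Finset.sum_le_sum fun f _ => ENNReal.rpow_le_rpow ?_ hp
        exact_mod_cast hK g _ List.length_ofFn
    _ = _ := by
        rw [Finset.sum_const, Finset.card_univ, nsmul_eq_mul, ENNReal.mul_rpow_of_nonneg _ _ hp,
          mul_assoc]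

noncomputable def etaRpow (p : ℝ) (n : ℕ) : ℝ≥0∞ :=
  limsup (fun g => A.secLengthSum S p n g / (wordLength S g : ℝ≥0∞) ^ p)
    (comap (wordLength S) atTop)

variable {A S}

lemma eta_eq_etaRpow_rpow {p : ℝ} (hp : 0 < p) (n : ℕ) :
    eta A S p n = A.etaRpow S p n ^ (1 / p) := by
  have hp' : 0 ≤ 1 / p := by positivity
  rw [etaRpow, ← ENNReal.orderIsoRpow_apply (1 / p) (by positivity), OrderIso.limsup_apply]
  refine limsup_congr (Eventually.of_forall fun g => ?_)
  rw [ENNReal.orderIsoRpow_apply, ENNReal.div_rpow_of_nonneg _ _ hp', one_div,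
    ENNReal.rpow_rpow_inv hp.ne', secLengthSum]

lemma etaRpow_ne_top (hgen : Subgroup.closure (S : Set G) = ⊤) (hsym : ∀ s ∈ S, s⁻¹ ∈ S)
    {p : ℝ} (hp : 0 ≤ p) (n : ℕ) : A.etaRpow S p n ≠ ∞ := by
  obtain ⟨C, hC, hle⟩ := A.exists_secLengthSum_le_mul S hgen hsym hp n
  refine ne_top_of_le_ne_top hC (limsup_le_of_le (by isBoundedDefault) ?_)
  exact Eventually.of_forall fun g => ENNReal.div_le_of_le_mul (hle g)

lemma exists_secLengthSum_le_mul_add_of_etaRpow_lt (hgen : Subgroup.closure (S : Set G) = ⊤)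
    (hsym : ∀ s ∈ S, s⁻¹ ∈ S) {p : ℝ} (hp : 0 < p) {n : ℕ} {b : ℝ≥0∞}
    (hb : A.etaRpow S p n < b) (hb' : b ≠ ∞) :
    ∃ D ≠ ∞, ∀ h, A.secLengthSum S p n h ≤ b * (wordLength S h : ℝ≥0∞) ^ p + D := by
  obtain ⟨C, hC, hle⟩ := A.exists_secLengthSum_le_mul S hgen hsym hp.le n
  obtain ⟨m, hm⟩ := eventually_atTop.mp (eventually_comap.mp (eventually_lt_of_limsup_lt hb))
  refine ⟨C * (m : ℝ≥0∞) ^ p, by finiteness, fun h => ?_⟩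
  rcases le_or_gt m (wordLength S h) with hmh | hmh
  · have hlt := hm _ hmh h rfl
    exact le_add_right <|
      (ENNReal.div_le_iff_le_mul (Or.inr hb') (Or.inl (by finiteness))).mp hlt.le
  · calc A.secLengthSum S p n h ≤ C * (wordLength S h : ℝ≥0∞) ^ p := hle h
      _ ≤ C * (m : ℝ≥0∞) ^ p := by gcongr
      _ ≤ _ := le_add_self

lemma etaRpow_add_le_mul (hgen : Subgroup.closure (S : Set G) = ⊤) (hsym : ∀ s ∈ S, s⁻¹ ∈ S)
    {p : ℝ} (hp : 0 < p) (n₁ n₂ : ℕ) :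
    A.etaRpow S p (n₁ + n₂) ≤ A.etaRpow S p n₁ * A.etaRpow S p n₂ := by
  refine ENNReal.le_mul_of_forall_lt_imp_le (etaRpow_ne_top hgen hsym hp.le n₁)
    (etaRpow_ne_top hgen hsym hp.le n₂) fun b hb hbtop => ?_
  obtain ⟨D, hD, hle⟩ := exists_secLengthSum_le_mul_add_of_etaRpow_lt hgen hsym hp hb hbtop.ne
  rw [mul_comm]
  refine ENNReal.limsup_div_le_mul_limsup_div hbtop.ne (D := Fintype.card (Fin n₁ → X) * D)
    (by finiteness) (tendsto_natCast_rpow_comap_atTop hp _) fun g => ?_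
  calc A.secLengthSum S p (n₁ + n₂) g
      = ∑ f : Fin n₁ → X, A.secLengthSum S p n₂ (A.sec g (List.ofFn f)) :=
        A.secLengthSum_add S p n₁ n₂ g
    _ ≤ ∑ f : Fin n₁ → X, (b * (wordLength S (A.sec g (List.ofFn f)) : ℝ≥0∞) ^ p + D) :=
        Finset.sum_le_sum fun f _ => hle _
    _ = b * A.secLengthSum S p n₁ g + Fintype.card (Fin n₁ → X) * D := by
        rw [Finset.sum_add_distrib, ← Finset.mul_sum, Finset.sum_const, Finset.card_univ,
          nsmul_eq_mul, secLengthSum]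

end SelfSimilarGroup

theorem eta_submultiplicative_general {X G : Type*} [Fintype X] [Group G]
    (A : SelfSimilarGroup X G) (S : Finset G)
    (hgen : Subgroup.closure (S : Set G) = ⊤)
    (hsym : ∀ s ∈ S, s⁻¹ ∈ S)
    (p : ℝ) (hp : 0 < p) (n₁ n₂ : ℕ) :
    eta A S p (n₁ + n₂) ≤ eta A S p n₁ * eta A S p n₂ := by
  simp only [SelfSimilarGroup.eta_eq_etaRpow_rpow hp]
  rw [← ENNReal.mul_rpow_of_nonneg _ _ (by positivity)]
  exact ENNReal.rpow_le_rpow (A.etaRpow_add_le_mul hgen hsym hp n₁ n₂) (by positivity)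

/-- Lemma 4.1. For every `p ∈ (0,∞)` and all `n₁ n₂ : ℕ`, the contraction
coefficients of a finitely generated self-similar group satisfy
`η_{p,n₁+n₂} ≤ η_{p,n₁} · η_{p,n₂}` in `[0,∞]`. -/
theorem eta_submultiplicative {X G : Type*} [Fintype X] [Nonempty X] [Group G]
    (A : SelfSimilarGroup X G) (S : Finset G)
    (hgen : Subgroup.closure (S : Set G) = ⊤)
    (hsym : ∀ s ∈ S, s⁻¹ ∈ S)
    (p : ℝ) (hp : 0 < p) (n₁ n₂ : ℕ) :
    eta A S p (n₁ + n₂) ≤ eta A S p n₁ * eta A S p n₂ :=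
  eta_submultiplicative_general A S hgen hsym p hp n₁ n₂
end

section
/- Let Z be a set carrying two metrics d and d′. Suppose there exists C > 1 such that for every ζ ∈ Z and every r > 0 there exists R > 0 with {ξ : d(ζ,ξ) ≤ R} ⊆ {ξ : d′(ζ,ξ) < r} and {ξ : d′(ζ,ξ) ≤ r} ⊆ {ξ : d(ζ,ξ) < C·R}. Then the identity map from (Z,d′) to (Z,d) is weakly quasisymmetric with constant C: for all ζ, ξ₁, ξ₂ ∈ Z, if d′(ζ,ξ₁) ≤ d′(ζ,ξ₂) then d(ζ,ξ₁) ≤ C·d(ζ,ξ₂). (Established in the proof of Proposition 3.4 of the paper.) -/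
/-- from the proof of Proposition 3.4. Let `Z` carry two metrics `d, d′`.
If there is `C > 1` such that for every `ζ` and `r > 0` there is `R > 0` with
`closedBall_d(ζ,R) ⊆ ball_{d′}(ζ,r)` and `closedBall_{d′}(ζ,r) ⊆ ball_d(ζ,C·R)`, then the
identity `(Z,d′) → (Z,d)` is weakly quasisymmetric with constant `C`. -/
theorem weakly_quasisymmetric {Z : Type*} (d d' : Z → Z → ℝ)
    (hd_nonneg : ∀ x y, 0 ≤ d x y)
    (hd_eq_zero : ∀ x y, d x y = 0 ↔ x = y)
    (hd_symm : ∀ x y, d x y = d y x)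
    (hd_triangle : ∀ x y z, d x z ≤ d x y + d y z)
    (hd'_nonneg : ∀ x y, 0 ≤ d' x y)
    (hd'_eq_zero : ∀ x y, d' x y = 0 ↔ x = y)
    (hd'_symm : ∀ x y, d' x y = d' y x)
    (hd'_triangle : ∀ x y z, d' x z ≤ d' x y + d' y z)
    (C : ℝ) (hC : 1 < C)
    (h : ∀ (ζ : Z) (r : ℝ), 0 < r → ∃ R : ℝ, 0 < R ∧
      {ξ : Z | d ζ ξ ≤ R} ⊆ {ξ : Z | d' ζ ξ < r} ∧
      {ξ : Z | d' ζ ξ ≤ r} ⊆ {ξ : Z | d ζ ξ < C * R}) :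
    ∀ ζ ξ₁ ξ₂ : Z, d' ζ ξ₁ ≤ d' ζ ξ₂ → d ζ ξ₁ ≤ C * d ζ ξ₂ := by
  intro ζ ξ₁ ξ₂ hle
  rcases eq_or_lt_of_le (hd'_nonneg ζ ξ₂) with h0 | hr
  · -- d' ζ ξ₂ = 0, hence ξ₂ = ζ and ξ₁ = ζ
    have h2 : ξ₂ = ζ := ((hd'_eq_zero ζ ξ₂).mp h0.symm).symm
    have h1 : ξ₁ = ζ := ((hd'_eq_zero ζ ξ₁).mp
      (le_antisymm (hle.trans h0.symm.le) (hd'_nonneg ζ ξ₁))).symm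
    subst h1; subst h2
    have hz : d ξ₂ ξ₂ = 0 := (hd_eq_zero ξ₂ ξ₂).mpr rfl
    simp [hz]
  · obtain ⟨R, hR, hsub1, hsub2⟩ := h ζ (d' ζ ξ₂) hr
    have hξ₂ : R < d ζ ξ₂ := by
      by_contra hcon
      push_neg at hcon
      exact absurd (hsub1 hcon) (by simp)
    have hξ₁ : d ζ ξ₁ < C * R := hsub2 hle
    have : C * R ≤ C * d ζ ξ₂ := by
      apply mul_le_mul_of_nonneg_left hξ₂.le (by linarith)
    linarith
end

section
/- In the Sierpiński carpet automaton group acting on the words over the 8-letter alphabet, the composition a∘c has infinite order: (a∘c)^k is not the identity bijection of X* for any integer k ≥ 1. (Claim of Section 6.3 of the paper.) -/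
/-- Output permutation of the generator `a` of the Sierpiński carpet group:
`(1 2)(6 7)` on the labels `1,…,8`, i.e. on `Fin 8` (0-based). -/
def sigmaA : Fin 8 → Fin 8 := ![1, 0, 2, 3, 4, 6, 5, 7]

/-- Output permutation of `b`: `(4 6)(5 8)` on the labels `1,…,8`. -/
def sigmaB : Fin 8 → Fin 8 := ![0, 1, 2, 5, 7, 3, 6, 4]

/-- Output permutation of `c`: `(2 3)(7 8)` on the labels `1,…,8`. -/
def sigmaC : Fin 8 → Fin 8 := ![0, 2, 1, 3, 4, 5, 7, 6]

/-- Output permutation of `d`: `(1 4)(3 5)` on the labels `1,…,8`. -/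
def sigmaD : Fin 8 → Fin 8 := ![3, 1, 4, 0, 2, 5, 6, 7]

/-- The generator `a = (12)(67)(1,1,a,1,a,1,1,a)` of the Sierpiński carpet group, acting on
finite words over the labels `1,…,8` (encoded as `Fin 8`, 0-based): the sections at the
letters `3, 5, 8` equal `a`, the others are trivial. -/
def aFun : List (Fin 8) → List (Fin 8)
  | [] => []
  | x :: w => sigmaA x :: (if x = 2 ∨ x = 4 ∨ x = 7 then aFun w else w)

/-- The generator `b = (46)(58)(b,b,b,1,1,1,1,1)`. -/
def bFun : List (Fin 8) → List (Fin 8)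
  | [] => []
  | x :: w => sigmaB x :: (if x = 0 ∨ x = 1 ∨ x = 2 then bFun w else w)

/-- The generator `c = (23)(78)(c,1,1,c,1,c,1,1)`. -/
def cFun : List (Fin 8) → List (Fin 8)
  | [] => []
  | x :: w => sigmaC x :: (if x = 0 ∨ x = 3 ∨ x = 5 then cFun w else w)

/-- The generator `d = (14)(35)(1,1,1,1,1,d,d,d)`. -/
def dFun : List (Fin 8) → List (Fin 8)
  | [] => []
  | x :: w => sigmaD x :: (if x = 5 ∨ x = 6 ∨ x = 7 then dFun w else w)

lemma ac_step3 (w : List (Fin 8)) :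
    (aFun ∘ cFun)^[3] (5 :: w) = 5 :: (aFun ∘ cFun) w := rfl

lemma ac_iter3 (m : ℕ) (w : List (Fin 8)) :
    (aFun ∘ cFun)^[3 * m] (5 :: w) = 5 :: (aFun ∘ cFun)^[m] w := by
  induction m with
  | zero => rfl
  | succ m ih =>
      have h : 3 * (m + 1) = 3 + 3 * m := by ring
      rw [h, Function.iterate_add_apply, ih, ac_step3, Function.iterate_succ_apply']

lemma ac_cycle3 : (aFun ∘ cFun)^[3] ([0] : List (Fin 8)) = [0] := rfl

lemma ac_mod3 (m : ℕ) (h : m % 3 ≠ 0) :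
    (aFun ∘ cFun)^[m] ([0] : List (Fin 8)) ≠ [0] := by
  have hm : m = 3 * (m / 3) + m % 3 := (Nat.div_add_mod m 3).symm
  have key : ∀ j, (aFun ∘ cFun)^[3 * j] ([0] : List (Fin 8)) = [0] := by
    intro j
    induction j with
    | zero => rfl
    | succ j ih =>
        have h3 : 3 * (j + 1) = 3 + 3 * j := by ring
        rw [h3, Function.iterate_add_apply, ih, ac_cycle3]
  rw [hm, Nat.add_comm, Function.iterate_add_apply, key]
  have h2 : m % 3 = 1 ∨ m % 3 = 2 := by omega
  rcases h2 with h2 | h2 <;> rw [h2] <;> decide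

lemma ac_moves : ∀ k : ℕ, 1 ≤ k → ∃ w, (aFun ∘ cFun)^[k] w ≠ w := by
  intro k
  induction k using Nat.strong_induction_on with
  | _ k ih =>
    intro hk
    by_cases h3 : k % 3 = 0
    · have hd : 3 ∣ k := Nat.dvd_of_mod_eq_zero h3
      obtain ⟨k', rfl⟩ := hd
      have hk' : 1 ≤ k' := by omega
      obtain ⟨w, hw⟩ := ih k' (by omega) hk'
      refine ⟨5 :: w, ?_⟩
      rw [ac_iter3]
      intro hcon
      injection hcon with _ h2
      exact hw h2
    · exact ⟨[0], ac_mod3 k h3⟩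

/-- Section 6.3. In the Sierpiński carpet automaton group, the
composition `a∘c` has infinite order. -/
theorem carpet_ac_infinite_order :
    ∀ k : ℕ, 1 ≤ k → (aFun ∘ cFun)^[k] ≠ id := by
  intro k hk h
  obtain ⟨w, hw⟩ := ac_moves k hk
  exact hw (by rw [h]; rfl)
end

section
/- Let G be the subgroup of bijections of X* generated by the Sierpiński carpet automaton generators a, b, c, d (each of which is an involution, so {a,b,c,d} is a symmetric generating set), with word length l relative to this generating set, and with sections g|_v defined by g(vw) = g(v)·(g|_v)(w) (equivalently, g|_v(w) is obtained from g(vw) by deleting its first |v| letters). Then the critical exponent of G satisfies inf{p ∈ (0,∞) : ∃n ≥ 1, η_{p,n} < 1} ≥ log 6 / log 3, where η_{p,n} is the limsup of (Σ_{v∈X^n} l(g|_v)^p)^{1/p}/l(g) as l(g) → ∞. (Lower bound p_c(G) ≥ log 6/log 3 derived in Section 6.3 of the paper from the relation T_p([ac]) = 2·3^{1−p}[ac].) -/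
open Filter Topology
open scoped ENNReal NNReal

/-- The generating set `{a, b, c, d}` of the Sierpiński carpet group (each generator is an
involution, so this set is symmetric). -/
def carpetGens : Set (List (Fin 8) → List (Fin 8)) := {aFun, bFun, cFun, dFun}

/-- The Sierpiński carpet group: the set of bijections of `X*` that are finite composites of
the generators (since the generators are involutions, this is the subgroup they generate). -/
def carpetGroup : Set (List (Fin 8) → List (Fin 8)) :=
  {f | ∃ w : List (List (Fin 8) → List (Fin 8)),
    (∀ s ∈ w, s ∈ carpetGens) ∧ w.foldr (· ∘ ·) id = f}

/-- Word length with respect to the generating set `{a, b, c, d}`. -/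
noncomputable def carpetLength (f : List (Fin 8) → List (Fin 8)) : ℕ :=
  sInf {n | ∃ w : List (List (Fin 8) → List (Fin 8)),
    (∀ s ∈ w, s ∈ carpetGens) ∧ w.length = n ∧ w.foldr (· ∘ ·) id = f}

/-- The section `g|_v` of a (length- and prefix-preserving) bijection `g` of `X*` at the
word `v`: `g|_v(w)` is obtained from `g(v ++ w)` by deleting the first `|v|` letters. -/
def carpetSec (f : List (Fin 8) → List (Fin 8)) (v : List (Fin 8)) :
    List (Fin 8) → List (Fin 8) :=
  fun w => (f (v ++ w)).drop v.length

/-- The contraction coefficient `η_{p,n}` of the Sierpiński carpet group: the limsup of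
`(Σ_{v∈X^n} l(g|_v)^p)^{1/p} / l(g)` over `g` in the group, as `l(g) → ∞`. -/
noncomputable def carpetEta (p : ℝ) (n : ℕ) : ℝ≥0∞ :=
  Filter.limsup
    (fun g : carpetGroup =>
      (∑ v : Fin n → Fin 8, (carpetLength (carpetSec g.1 (List.ofFn v)) : ℝ≥0∞) ^ p) ^ (1 / p)
        / (carpetLength g.1 : ℝ≥0∞))
    (Filter.comap (fun g : carpetGroup => carpetLength g.1) Filter.atTop)

/-!
For `h = (ac)^(3^k)` or `(ca)^(3^k)`, the section of `h` at each of six letters of `X` is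
`(ac)^(3^(k-1))` or `(ca)^(3^(k-1))`. So if `T k` is the least length of these two powers and
`η_{p,n} < 1`, then `6^n (T k)^p ≤ (T (k+n))^p` once `T k` is large, which it eventually is
because balls are finite and these powers are pairwise distinct. With `T k ≤ 2·3^k` this forces
`6 ≤ 3^p`, i.e. `p ≥ log 6 / log 3`.

The set of exponents must also be shown nonempty, since `sInf ∅ = 0` in `ℝ`. For each of the
pairs `ab, ad, bc, cd` one has `(st)^6 = 1`, and the generators active at any given letter belong
to one such pair. Hence no block of 12 letters of a geodesic word is active throughout at one
letter, so `12 l(g|_x) ≤ 11 l(g) + 12`, which gives `η_{48,1} < 1`.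
-/

namespace SelfSimilar

variable {α ι : Type*} (σ : ι → α → α) (act : ι → α → Bool)

def gen (i : ι) : List α → List α
  | [] => []
  | x :: w => σ i x :: if act i x then gen i w else w

def eval : List ι → List α → List α
  | [] => id
  | i :: w => gen σ act i ∘ eval w

def wordPerm : List ι → α → α
  | [], x => x
  | i :: w, x => σ i (wordPerm w x)

def wordSection : List ι → α → List ι
  | [], _ => []
  | i :: w, x => (if act i (wordPerm σ w x) then [i] else []) ++ wordSection w x

def alternating (s t : ι) : ℕ → List ι
  | 0 => []
  | n + 1 => s :: alternating t s n

def cancelAdjacent [DecidableEq ι] : List ι → List ι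
  | i :: j :: w => if i = j then cancelAdjacent w else i :: cancelAdjacent (j :: w)
  | w => w

variable {σ act}

theorem eval_append (u v : List ι) : eval σ act (u ++ v) = eval σ act u ∘ eval σ act v := by
  induction u with
  | nil => rfl
  | cons i u ih => simp only [List.cons_append, eval, ih, Function.comp_assoc]

theorem eval_apply_nil (w : List ι) : eval σ act w [] = [] := by
  induction w with
  | nil => rfl
  | cons i w ih => simp only [eval, Function.comp_apply, ih, gen]

theorem eval_cons_apply (w : List ι) (x : α) (ω : List α) :
    eval σ act w (x :: ω) = wordPerm σ w x :: eval σ act (wordSection σ act w x) ω := by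
  induction w with
  | nil => rfl
  | cons i w ih =>
    simp only [eval, Function.comp_apply, ih, gen, wordPerm, wordSection]
    split_ifs <;> rfl

theorem wordPerm_append (u v : List ι) (x : α) :
    wordPerm σ (u ++ v) x = wordPerm σ u (wordPerm σ v x) := by
  induction u with
  | nil => rfl
  | cons i u ih => simp only [List.cons_append, wordPerm, ih]

theorem wordSection_append (u v : List ι) (x : α) :
    wordSection σ act (u ++ v) x =
      wordSection σ act u (wordPerm σ v x) ++ wordSection σ act v x := by
  induction u with
  | nil => rfl
  | cons i u ih =>
    simp only [List.cons_append, wordSection, wordPerm_append, ih, List.append_assoc]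

theorem length_wordSection_le (w : List ι) (x : α) :
    (wordSection σ act w x).length ≤ w.length := by
  induction w with
  | nil => simp [wordSection]
  | cons i w ih =>
    simp only [wordSection, List.length_append, List.length_cons]
    split_ifs <;> simp <;> omega

theorem eval_eq_id_of_wordSection {w : List ι}
    (h : ∀ x, wordPerm σ w x = x ∧
      (wordSection σ act w x = w ∨ eval σ act (wordSection σ act w x) = id)) :
    eval σ act w = id := by
  funext ω
  induction ω with
  | nil => exact eval_apply_nil w
  | cons x ω ih =>
    rw [eval_cons_apply, (h x).1]
    rcases (h x).2 with hw | hw <;> rw [hw]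
    · rw [ih]; rfl
    · rfl

theorem eq_alternating_of_isChain_ne {s t : ι} {u : List ι} (hu : u.IsChain (· ≠ ·))
    (hst : ∀ i ∈ u, i = s ∨ i = t) :
    u = alternating s t u.length ∨ u = alternating t s u.length := by
  induction u with
  | nil => exact Or.inl rfl
  | cons i r ih =>
    have hi := hst i List.mem_cons_self
    rcases r with _ | ⟨j, r⟩
    · rcases hi with rfl | rfl
      · exact Or.inl rfl
      · exact Or.inr rfl
    · have hij : i ≠ j := (List.isChain_cons_cons.1 hu).1
      rcases ih hu.tail (fun k hk => hst k (List.mem_cons_of_mem _ hk)) with hr | hr <;>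
        simp only [List.length_cons, alternating, List.cons.injEq] at hr ⊢ <;>
        obtain ⟨rfl, hr⟩ := hr <;> rcases hi with rfl | rfl
      · exact absurd rfl hij
      · exact Or.inr ⟨rfl, rfl, hr⟩
      · exact Or.inl ⟨rfl, rfl, hr⟩
      · exact absurd rfl hij

theorem gen_involutive (hσ : ∀ i, Function.Involutive (σ i))
    (hact : ∀ i x, act i (σ i x) = act i x) (i : ι) : Function.Involutive (gen σ act i) := by
  intro w
  induction w with
  | nil => rfl
  | cons x w ih =>
    simp only [gen, hact, hσ i x]
    split_ifs <;> simp [ih]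

theorem eval_append_cons_cons (hσ : ∀ i, Function.Involutive (σ i))
    (hact : ∀ i x, act i (σ i x) = act i x) (p q : List ι) (i : ι) :
    eval σ act (p ++ i :: i :: q) = eval σ act (p ++ q) := by
  rw [eval_append, eval_append]
  exact congrArg _ (funext fun ω => gen_involutive hσ hact i _)

theorem eval_cancelAdjacent [DecidableEq ι] (hσ : ∀ i, Function.Involutive (σ i))
    (hact : ∀ i x, act i (σ i x) = act i x) (w : List ι) :
    eval σ act (cancelAdjacent w) = eval σ act w := by
  induction w using cancelAdjacent.induct with
  | case1 j w ih =>
    rw [cancelAdjacent, if_pos rfl, ih]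
    exact (eval_append_cons_cons hσ hact [] w j).symm
  | case2 i j w hij ih => simp only [cancelAdjacent, if_neg hij, eval, ih]
  | case3 w h =>
    rcases w with _ | ⟨i, _ | ⟨j, w⟩⟩
    · rfl
    · rfl
    · exact absurd rfl (h i j w)

theorem forall_active_of_length_wordSection_eq (hfix : ∀ i x, act i x → σ i x = x)
    {w : List ι} {x : α} (h : (wordSection σ act w x).length = w.length) :
    (∀ i ∈ w, act i x) ∧ wordPerm σ w x = x := by
  induction w with
  | nil => exact ⟨by simp, rfl⟩
  | cons i w ih =>
    have hle := length_wordSection_le (σ := σ) (act := act) w x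
    by_cases hi : act i (wordPerm σ w x)
    · simp only [wordSection, hi, if_true, List.singleton_append, List.length_cons,
        Nat.add_right_cancel_iff] at h
      obtain ⟨hw, hperm⟩ := ih h
      rw [hperm] at hi
      refine ⟨List.forall_mem_cons.2 ⟨hi, hw⟩, ?_⟩
      simp only [wordPerm, hperm, hfix i x hi]
    · rw [wordSection, if_neg hi, List.nil_append, List.length_cons] at h
      omega

theorem length_wordSection_mul_le {N : ℕ} {w : List ι}
    (h : ∀ u, u <:+: w → u.length = N + 1 → ∀ y, (wordSection σ act u y).length ≤ N)
    (x : α) : (N + 1) * (wordSection σ act w x).length ≤ N * w.length + (N + 1) := by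
  induction hlen : w.length using Nat.strong_induction_on generalizing w x with
  | _ n ih =>
    by_cases hsmall : n ≤ N + 1
    · have := length_wordSection_le (σ := σ) (act := act) w x
      nlinarith
    · have hw : w = w.take (N + 1) ++ w.drop (N + 1) := (List.take_append_drop _ _).symm
      have htake :
          (wordSection σ act (w.take (N + 1)) (wordPerm σ (w.drop (N + 1)) x)).length ≤ N :=
        h _ (List.take_prefix _ _).isInfix (by simp; omega) _
      have hdrop := ih _ (by simp; omega) (w := w.drop (N + 1))
        (fun u hu => h u (hu.trans (List.drop_suffix _ _).isInfix)) x rfl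
      rw [hw, wordSection_append, List.length_append]
      simp only [List.length_drop, hlen] at hdrop
      have : N * (n - (N + 1)) + N * (N + 1) = N * n := by
        rw [← Nat.mul_add, Nat.sub_add_cancel (by omega)]
      nlinarith

end SelfSimilar

open SelfSimilar

inductive Gen | A | B | C | D
  deriving DecidableEq

instance : Fintype Gen := ⟨{.A, .B, .C, .D}, fun g => by cases g <;> decide⟩

namespace Gen

def perm : Gen → Fin 8 → Fin 8
  | A => sigmaA | B => sigmaB | C => sigmaC | D => sigmaD

def active : Gen → Fin 8 → Bool
  | A => ![false, false, true, false, true, false, false, true]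
  | B => ![true, true, true, false, false, false, false, false]
  | C => ![true, false, false, true, false, true, false, false]
  | D => ![false, false, false, false, false, true, true, true]

def toFun : Gen → List (Fin 8) → List (Fin 8)
  | A => aFun | B => bFun | C => cFun | D => dFun

theorem perm_perm (g : Gen) (x : Fin 8) : g.perm (g.perm x) = x := by
  revert g x; decide

theorem active_perm (g : Gen) (x : Fin 8) : g.active (g.perm x) = g.active x := by
  revert g x; decide

theorem perm_eq_of_active (g : Gen) (x : Fin 8) : g.active x → g.perm x = x := by
  revert g x; decide

theorem gen_eq_toFun (g : Gen) : gen perm active g = g.toFun := by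
  funext w
  induction w with
  | nil => cases g <;> rfl
  | cons x w ih =>
    cases g <;> fin_cases x <;> simp only [toFun] at ih ⊢ <;>
      simp [gen, aFun, bFun, cFun, dFun, perm, active, ih]

end Gen

open Gen

theorem exists_map_toFun_eq {l : List (List (Fin 8) → List (Fin 8))}
    (hl : ∀ s ∈ l, s ∈ carpetGens) : ∃ w : List Gen, w.map toFun = l := by
  induction l with
  | nil => exact ⟨[], rfl⟩
  | cons s l ih =>
    obtain ⟨w, rfl⟩ := ih fun t ht => hl t (List.mem_cons_of_mem _ ht)
    obtain ⟨g, rfl⟩ : ∃ g : Gen, g.toFun = s := by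
      rcases hl s List.mem_cons_self with rfl | rfl | rfl | rfl
      exacts [⟨A, rfl⟩, ⟨B, rfl⟩, ⟨C, rfl⟩, ⟨D, rfl⟩]
    exact ⟨g :: w, rfl⟩

theorem mem_carpetGens_of_mem_map_toFun {w : List Gen} {s : List (Fin 8) → List (Fin 8)}
    (hs : s ∈ w.map toFun) : s ∈ carpetGens := by
  obtain ⟨g, -, rfl⟩ := List.mem_map.1 hs
  cases g <;> simp [toFun, carpetGens]

theorem foldr_map_toFun (w : List Gen) :
    (w.map toFun).foldr (· ∘ ·) id = eval perm active w := by
  induction w with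
  | nil => rfl
  | cons g w ih => rw [List.map_cons, List.foldr_cons, ih, ← gen_eq_toFun]; rfl

theorem eval_mem_carpetGroup (w : List Gen) : eval perm active w ∈ carpetGroup :=
  ⟨w.map toFun, fun _ => mem_carpetGens_of_mem_map_toFun, foldr_map_toFun w⟩

theorem carpetLength_eval_le (w : List Gen) : carpetLength (eval perm active w) ≤ w.length :=
  Nat.sInf_le ⟨w.map toFun, fun _ => mem_carpetGens_of_mem_map_toFun, List.length_map _,
    foldr_map_toFun w⟩

theorem exists_eval_eq_of_mem_carpetGroup {f : List (Fin 8) → List (Fin 8)}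
    (hf : f ∈ carpetGroup) :
    ∃ w : List Gen, eval perm active w = f ∧ w.length = carpetLength f := by
  obtain ⟨l, hl, hlf⟩ := hf
  obtain ⟨l', hl', hlen, hl'f⟩ := Nat.sInf_mem
    (s := {n | ∃ w : List (List (Fin 8) → List (Fin 8)),
      (∀ s ∈ w, s ∈ carpetGens) ∧ w.length = n ∧ w.foldr (· ∘ ·) id = f})
    ⟨l.length, l, hl, rfl, hlf⟩
  obtain ⟨w, rfl⟩ := exists_map_toFun_eq hl'
  exact ⟨w, (foldr_map_toFun w).symm.trans hl'f, (List.length_map _).symm.trans hlen⟩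

theorem carpetSec_eval_singleton (w : List Gen) (x : Fin 8) :
    carpetSec (eval perm active w) [x] = eval perm active (wordSection perm active w x) := by
  funext ω
  simp [carpetSec, eval_cons_apply]

theorem comp_mem_carpetGroup {f g : List (Fin 8) → List (Fin 8)} (hf : f ∈ carpetGroup)
    (hg : g ∈ carpetGroup) : f ∘ g ∈ carpetGroup := by
  obtain ⟨u, rfl, -⟩ := exists_eval_eq_of_mem_carpetGroup hf
  obtain ⟨v, rfl, -⟩ := exists_eval_eq_of_mem_carpetGroup hg
  rw [← eval_append]
  exact eval_mem_carpetGroup _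

theorem carpetLength_comp_le {f g : List (Fin 8) → List (Fin 8)} (hf : f ∈ carpetGroup)
    (hg : g ∈ carpetGroup) : carpetLength (f ∘ g) ≤ carpetLength f + carpetLength g := by
  obtain ⟨u, rfl, hu⟩ := exists_eval_eq_of_mem_carpetGroup hf
  obtain ⟨v, rfl, hv⟩ := exists_eval_eq_of_mem_carpetGroup hg
  rw [← eval_append, ← hu, ← hv, ← List.length_append]
  exact carpetLength_eval_le _

theorem iterate_mem_carpetGroup {f : List (Fin 8) → List (Fin 8)} (hf : f ∈ carpetGroup)
    (m : ℕ) : f^[m] ∈ carpetGroup := by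
  induction m with
  | zero => exact eval_mem_carpetGroup []
  | succ m ih => rw [Function.iterate_succ']; exact comp_mem_carpetGroup hf ih

theorem carpetLength_iterate_le {f : List (Fin 8) → List (Fin 8)} (hf : f ∈ carpetGroup)
    (m : ℕ) : carpetLength f^[m] ≤ m * carpetLength f := by
  induction m with
  | zero => simpa [eval] using carpetLength_eval_le []
  | succ m ih =>
    rw [Function.iterate_succ', Nat.succ_mul]
    have := carpetLength_comp_le hf (iterate_mem_carpetGroup hf m)
    omega

theorem one_le_carpetLength {f : List (Fin 8) → List (Fin 8)} (hf : f ∈ carpetGroup)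
    (hne : f ≠ id) : 1 ≤ carpetLength f := by
  obtain ⟨w, rfl, hw⟩ := exists_eval_eq_of_mem_carpetGroup hf
  rcases w with _ | ⟨g, w⟩
  · exact absurd rfl hne
  · simp [← hw]

theorem finite_carpetLength_lt (m : ℕ) :
    {f | f ∈ carpetGroup ∧ carpetLength f < m}.Finite := by
  refine ((List.finite_length_lt Gen m).image (eval perm active)).subset ?_
  rintro f ⟨hf, hlt⟩
  obtain ⟨w, rfl, hw⟩ := exists_eval_eq_of_mem_carpetGroup hf
  exact ⟨w, by simpa [hw] using hlt, rfl⟩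

def relatorPairs : List (Gen × Gen) :=
  [(A, B), (B, A), (A, D), (D, A), (B, C), (C, B), (C, D), (D, C)]

theorem swap_mem_relatorPairs {s t : Gen} :
    (s, t) ∈ relatorPairs → (t, s) ∈ relatorPairs := by
  revert s t; decide

theorem eval_alternating_twelve {s t : Gen} (h : (s, t) ∈ relatorPairs) :
    eval perm active (alternating s t 12) = id := by
  have sections : ∀ s t : Gen, (s, t) ∈ relatorPairs → ∀ x : Fin 8,
      wordPerm perm (alternating s t 12) x = x ∧
        (wordSection perm active (alternating s t 12) x = alternating s t 12 ∨
          cancelAdjacent (wordSection perm active (alternating s t 12) x) = []) := by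
    decide
  refine eval_eq_id_of_wordSection fun x => ⟨(sections s t h x).1, ?_⟩
  refine (sections s t h x).2.imp_right fun hc => ?_
  rw [← eval_cancelAdjacent perm_perm active_perm, hc]
  rfl

theorem exists_relatorPairs_active (y : Fin 8) :
    ∃ s t : Gen, (s, t) ∈ relatorPairs ∧ ∀ g : Gen, g.active y → g = s ∨ g = t := by
  revert y; decide

theorem exists_shorter_of_forall_active {u : List Gen} {y : Fin 8} (hu : u.length = 12)
    (hact : ∀ g ∈ u, g.active y) :
    ∃ u', u'.length < u.length ∧ eval perm active u' = eval perm active u := by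
  by_cases hchain : u.IsChain (· ≠ ·)
  · obtain ⟨s, t, hst, hy⟩ := exists_relatorPairs_active y
    refine ⟨[], by simp [hu], ?_⟩
    rcases eq_alternating_of_isChain_ne hchain (fun g hg => hy g (hact g hg)) with h | h <;>
      rw [h, hu]
    · exact (eval_alternating_twelve hst).symm
    · exact (eval_alternating_twelve (swap_mem_relatorPairs hst)).symm
  · simp only [List.isChain_iff_forall_rel_of_append_cons_cons, not_forall, not_not] at hchain
    obtain ⟨g, _, p, q, rfl, rfl⟩ := hchain
    exact ⟨p ++ q, by simp, (eval_append_cons_cons perm_perm active_perm p q g).symm⟩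

theorem length_wordSection_infix_le_eleven {w : List Gen}
    (hw : w.length = carpetLength (eval perm active w)) {u : List Gen} (hu : u <:+: w)
    (hlen : u.length = 12) (y : Fin 8) : (wordSection perm active u y).length ≤ 11 := by
  by_contra! h
  have hfull : (wordSection perm active u y).length = u.length :=
    le_antisymm (length_wordSection_le _ _) (by omega)
  obtain ⟨u', hu', heq⟩ := exists_shorter_of_forall_active hlen
    (forall_active_of_length_wordSection_eq perm_eq_of_active hfull).1
  obtain ⟨p, q, rfl⟩ := hu
  have := carpetLength_eval_le (p ++ u' ++ q)
  rw [eval_append, eval_append, heq, ← eval_append, ← eval_append, ← hw] at this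
  simp only [List.length_append] at this
  omega

theorem twelve_mul_carpetLength_carpetSec_le {f : List (Fin 8) → List (Fin 8)}
    (hf : f ∈ carpetGroup) (x : Fin 8) :
    12 * carpetLength (carpetSec f [x]) ≤ 11 * carpetLength f + 12 := by
  obtain ⟨w, rfl, hw⟩ := exists_eval_eq_of_mem_carpetGroup hf
  have hsec := length_wordSection_mul_le (N := 11)
    (fun u hu hlen => length_wordSection_infix_le_eleven hw hu hlen) x
  have := carpetLength_eval_le (wordSection perm active w x)
  rw [carpetSec_eval_singleton]
  omega

noncomputable def sectionRatio (p : ℝ) (n : ℕ) (f : List (Fin 8) → List (Fin 8)) :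
    ℝ≥0∞ :=
  (∑ v : Fin n → Fin 8, (carpetLength (carpetSec f (List.ofFn v)) : ℝ≥0∞) ^ p) ^ (1 / p)
    / (carpetLength f : ℝ≥0∞)

theorem carpetEta_eq_limsup_sectionRatio (p : ℝ) (n : ℕ) :
    carpetEta p n = limsup (fun g : carpetGroup => sectionRatio p n g.1)
      (comap (fun g : carpetGroup => carpetLength g.1) atTop) :=
  rfl

theorem sectionRatio_le_ofReal_iff {p c : ℝ} (hp : 0 < p) (hc : 0 ≤ c) (n : ℕ)
    {f : List (Fin 8) → List (Fin 8)} (hf : carpetLength f ≠ 0) :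
    sectionRatio p n f ≤ ENNReal.ofReal c ↔
      ∑ v : Fin n → Fin 8, (carpetLength (carpetSec f (List.ofFn v)) : ℝ) ^ p
        ≤ (c * carpetLength f) ^ p := by
  have hcast : ∀ m : ℕ, (m : ℝ≥0∞) ^ p = ENNReal.ofReal ((m : ℝ) ^ p) := fun m => by
    rw [← ENNReal.ofReal_natCast, ENNReal.ofReal_rpow_of_nonneg m.cast_nonneg hp.le]
  rw [sectionRatio, ENNReal.div_le_iff (by simpa using hf) (ENNReal.natCast_ne_top _), one_div,
    ENNReal.rpow_inv_le_iff hp]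
  simp only [hcast]
  rw [← ENNReal.ofReal_natCast, ← ENNReal.ofReal_mul hc,
    ENNReal.ofReal_rpow_of_nonneg (by positivity) hp.le,
    ← ENNReal.ofReal_sum_of_nonneg (fun _ _ => by positivity),
    ENNReal.ofReal_le_ofReal_iff (by positivity)]

theorem exists_sum_rpow_le_of_carpetEta_lt_one {p : ℝ} (hp : 0 < p) {n : ℕ}
    (h : carpetEta p n < 1) :
    ∃ m, ∀ f ∈ carpetGroup, m ≤ carpetLength f →
      ∑ v : Fin n → Fin 8, (carpetLength (carpetSec f (List.ofFn v)) : ℝ) ^ p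
        ≤ (carpetLength f : ℝ) ^ p := by
  rw [carpetEta_eq_limsup_sectionRatio] at h
  obtain ⟨m, hm⟩ := eventually_atTop.1 (eventually_comap.1 (eventually_lt_of_limsup_lt h))
  refine ⟨m + 1, fun f hf hmf => ?_⟩
  rw [← one_mul (carpetLength f : ℝ),
    ← sectionRatio_le_ofReal_iff hp zero_le_one n (by omega), ENNReal.ofReal_one]
  exact (hm (carpetLength f) (by omega) ⟨f, hf⟩ rfl).le

-- For `L ≥ 132`, `(11 L + 12) / 12 ≤ 61 L / 66`; and `8 (61 / 66)^48 ≤ (49 / 50)^48`.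
theorem sum_rpow_le_of_twelve_mul_le {L : ℕ} (hL : 132 ≤ L) {ℓ : (Fin 1 → Fin 8) → ℕ}
    (hℓ : ∀ v, 12 * ℓ v ≤ 11 * L + 12) :
    ∑ v, (ℓ v : ℝ) ^ (48 : ℝ) ≤ (49 / 50 * L) ^ (48 : ℝ) := by
  have hv : ∀ v, (ℓ v : ℝ) ≤ 61 / 66 * L := fun v => by
    have : 66 * ℓ v ≤ 61 * L := by have := hℓ v; omega
    rw [div_mul_eq_mul_div, le_div_iff₀ (by norm_num)]
    exact_mod_cast (mul_comm (ℓ v) 66 ▸ this)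
  simp only [show (48 : ℝ) = (48 : ℕ) by norm_num, Real.rpow_natCast]
  calc ∑ v, (ℓ v : ℝ) ^ 48 ≤ ∑ _v : Fin 1 → Fin 8, (61 / 66 * L : ℝ) ^ 48 :=
        Finset.sum_le_sum fun v _ => pow_le_pow_left₀ (Nat.cast_nonneg _) (hv v) _
    _ = 8 * (61 / 66) ^ 48 * (L : ℝ) ^ 48 := by simp [mul_pow]; ring
    _ ≤ (49 / 50) ^ 48 * (L : ℝ) ^ 48 := by gcongr; norm_num
    _ = (49 / 50 * L) ^ 48 := (mul_pow _ _ _).symm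

theorem carpetEta_48_one_lt_one : carpetEta 48 1 < 1 := by
  have hbound : ∀ f ∈ carpetGroup, 132 ≤ carpetLength f →
      sectionRatio 48 1 f ≤ ENNReal.ofReal (49 / 50) := fun f hf hL => by
    rw [sectionRatio_le_ofReal_iff (by norm_num) (by norm_num) 1 (by omega)]
    refine sum_rpow_le_of_twelve_mul_le hL fun v => ?_
    rw [List.ofFn_succ, List.ofFn_zero]
    exact twelve_mul_carpetLength_carpetSec_le hf (v 0)
  rw [carpetEta_eq_limsup_sectionRatio]
  refine lt_of_le_of_lt ?_ (ENNReal.ofReal_lt_one.2 (by norm_num : (49 / 50 : ℝ) < 1))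
  exact limsup_le_of_le (by isBoundedDefault)
    (eventually_comap.2 (eventually_atTop.2 ⟨132, fun L hL g hg => hbound g.1 g.2 (hg ▸ hL)⟩))

def acWords : List (List Gen) := [[A, C], [C, A]]

def IsTriadicACPower (k : ℕ) (h : List (Fin 8) → List (Fin 8)) : Prop :=
  ∃ u ∈ acWords, h = (eval perm active u)^[3 ^ k]

-- The letters at which the sections of `(ac)^3` and of `(ca)^3` are `ac` or `ca`.
def acLetters : Finset (Fin 8) := {0, 1, 2, 5, 6, 7}

namespace IsTriadicACPower

variable {k : ℕ} {h : List (Fin 8) → List (Fin 8)}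

theorem mem_carpetGroup (hh : IsTriadicACPower k h) : h ∈ carpetGroup := by
  obtain ⟨u, -, rfl⟩ := hh
  exact iterate_mem_carpetGroup (eval_mem_carpetGroup u) _

theorem carpetLength_le (hh : IsTriadicACPower k h) : carpetLength h ≤ 2 * 3 ^ k := by
  obtain ⟨u, hu, rfl⟩ := hh
  have hu2 : u.length = 2 := by revert u; decide
  calc carpetLength (eval perm active u)^[3 ^ k]
      ≤ 3 ^ k * carpetLength (eval perm active u) :=
        carpetLength_iterate_le (eval_mem_carpetGroup u) _
    _ ≤ 3 ^ k * 2 := Nat.mul_le_mul_left _ (hu2 ▸ carpetLength_eval_le u)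
    _ = 2 * 3 ^ k := mul_comm _ _

theorem exists_cons (hh : IsTriadicACPower (k + 1) h) {x : Fin 8} (hx : x ∈ acLetters) :
    ∃ h', IsTriadicACPower k h' ∧ ∀ w, h (x :: w) = x :: h' w := by
  have cube : ∀ u ∈ acWords, ∀ x ∈ acLetters, wordPerm perm (u ++ u ++ u) x = x ∧
      wordSection perm active (u ++ u ++ u) x ∈ acWords := by
    decide
  obtain ⟨u, hu, rfl⟩ := hh
  obtain ⟨hperm, hsec⟩ := cube u hu x hx
  have hsemi : Function.Semiconj (x :: ·)
      (eval perm active (wordSection perm active (u ++ u ++ u) x)) (eval perm active u)^[3] := by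
    intro w
    have : (eval perm active u)^[3] = eval perm active (u ++ u ++ u) := by
      rw [eval_append, eval_append]; rfl
    rw [this, eval_cons_apply, hperm]
  refine ⟨_, ⟨_, hsec, rfl⟩, fun w => ?_⟩
  rw [pow_succ', Function.iterate_mul]
  exact (hsemi.iterate_right (3 ^ k) w).symm

theorem exists_append (hh : IsTriadicACPower k h) {v : List (Fin 8)}
    (hv : ∀ x ∈ v, x ∈ acLetters) (hvk : v.length ≤ k) :
    ∃ h', IsTriadicACPower (k - v.length) h' ∧ ∀ w, h (v ++ w) = v ++ h' w := by
  induction v generalizing k h with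
  | nil => exact ⟨h, hh, fun w => rfl⟩
  | cons x v ih =>
    obtain ⟨k, rfl⟩ : ∃ k', k = k' + 1 := ⟨k - 1, by simp at hvk; omega⟩
    obtain ⟨h₁, hh₁, hx⟩ := hh.exists_cons (hv x List.mem_cons_self)
    obtain ⟨h', hh', hv'⟩ := ih hh₁ (fun y hy => hv y (List.mem_cons_of_mem _ hy))
      (by simpa using hvk)
    refine ⟨h', by simpa using hh', fun w => ?_⟩
    rw [List.cons_append, hx, hv', List.cons_append]

theorem carpetSec_ofFn {n : ℕ} (hh : IsTriadicACPower (k + n) h) (v : Fin n → Fin 8)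
    (hv : ∀ i, v i ∈ acLetters) : IsTriadicACPower k (carpetSec h (List.ofFn v)) := by
  obtain ⟨h', hh', hv'⟩ := hh.exists_append (v := List.ofFn v) (List.forall_mem_ofFn_iff.2 hv)
    (by simp)
  rw [List.length_ofFn, Nat.add_sub_cancel] at hh'
  convert hh'
  funext w
  simp [carpetSec, hv']

theorem apply_nil (hh : IsTriadicACPower k h) : h [] = [] := by
  obtain ⟨u, -, rfl⟩ := hh
  exact Function.iterate_fixed (eval_apply_nil u) _

theorem apply_replicate_of_le (hh : IsTriadicACPower k h) {j : ℕ} (hj : j ≤ k) :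
    h (List.replicate j 0) = List.replicate j 0 := by
  obtain ⟨h', hh', hv⟩ := hh.exists_append (v := List.replicate j 0)
    (fun x hx => List.eq_of_mem_replicate hx ▸ by decide) (by simpa using hj)
  simpa [hh'.apply_nil] using hv []

theorem apply_replicate_ne (hh : IsTriadicACPower k h) :
    h (List.replicate (k + 1) 0) ≠ List.replicate (k + 1) 0 := by
  obtain ⟨h', ⟨u, hu, rfl⟩, hv⟩ := hh.exists_append (v := List.replicate k 0)
    (fun x hx => List.eq_of_mem_replicate hx ▸ by decide) (by simp)
  have moves : ∀ u ∈ acWords, wordPerm perm u 0 ≠ 0 := by decide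
  rw [List.replicate_succ', hv, List.length_replicate, Nat.sub_self, pow_zero,
    Function.iterate_one, eval_cons_apply]
  simp [moves u hu]

theorem unique {k' : ℕ} (hh : IsTriadicACPower k h) (hh' : IsTriadicACPower k' h) : k = k' := by
  by_contra hne
  rcases Nat.lt_or_gt_of_ne hne with hlt | hlt
  · exact hh.apply_replicate_ne (hh'.apply_replicate_of_le hlt)
  · exact hh'.apply_replicate_ne (hh.apply_replicate_of_le hlt)

end IsTriadicACPower

noncomputable def triadicLength (k : ℕ) : ℕ :=
  sInf (carpetLength '' {h | IsTriadicACPower k h})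

theorem exists_carpetLength_eq_triadicLength (k : ℕ) :
    ∃ h, IsTriadicACPower k h ∧ carpetLength h = triadicLength k :=
  Nat.sInf_mem (s := carpetLength '' {h | IsTriadicACPower k h})
    ⟨_, _, ⟨[A, C], List.mem_cons_self, rfl⟩, rfl⟩

theorem IsTriadicACPower.triadicLength_le {k : ℕ} {h : List (Fin 8) → List (Fin 8)}
    (hh : IsTriadicACPower k h) : triadicLength k ≤ carpetLength h :=
  Nat.sInf_le ⟨h, hh, rfl⟩

theorem one_le_triadicLength (k : ℕ) : 1 ≤ triadicLength k := by
  obtain ⟨h, hh, hlen⟩ := exists_carpetLength_eq_triadicLength k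
  refine hlen ▸ one_le_carpetLength hh.mem_carpetGroup fun hid => ?_
  exact hh.apply_replicate_ne (by rw [hid]; rfl)

theorem triadicLength_le (k : ℕ) : triadicLength k ≤ 2 * 3 ^ k := by
  obtain ⟨h, hh, hlen⟩ := exists_carpetLength_eq_triadicLength k
  exact hlen ▸ hh.carpetLength_le

theorem tendsto_triadicLength_atTop : Tendsto triadicLength atTop atTop := by
  refine tendsto_atTop.2 fun m => ?_
  rw [← Nat.cofinite_eq_atTop, eventually_cofinite]
  choose h hh hlen using exists_carpetLength_eq_triadicLength
  refine Set.Finite.of_finite_image (f := h) ((finite_carpetLength_lt m).subset ?_)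
    fun k _ k' _ he => (hh k).unique (he ▸ hh k')
  rintro _ ⟨k, hk, rfl⟩
  exact ⟨(hh k).mem_carpetGroup, by rw [hlen]; exact not_le.1 hk⟩

section LowerBound

variable {p : ℝ} {n m : ℕ}
  (hm : ∀ f ∈ carpetGroup, m ≤ carpetLength f →
    ∑ v : Fin n → Fin 8, (carpetLength (carpetSec f (List.ofFn v)) : ℝ) ^ p
      ≤ (carpetLength f : ℝ) ^ p)
include hm

theorem six_pow_mul_triadicLength_rpow_le (hp : 0 < p) {k : ℕ}
    (hk : m ≤ triadicLength (k + n)) :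
    6 ^ n * (triadicLength k : ℝ) ^ p ≤ (triadicLength (k + n) : ℝ) ^ p := by
  obtain ⟨h, hh, hlen⟩ := exists_carpetLength_eq_triadicLength (k + n)
  have hcard : (Fintype.piFinset fun _ : Fin n => acLetters).card = 6 ^ n := by
    simp [Fintype.card_piFinset, show acLetters.card = 6 by decide]
  calc 6 ^ n * (triadicLength k : ℝ) ^ p
      = ∑ _v ∈ Fintype.piFinset fun _ : Fin n => acLetters, (triadicLength k : ℝ) ^ p := by
        simp [hcard]
    _ ≤ ∑ v ∈ Fintype.piFinset fun _ : Fin n => acLetters,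
          (carpetLength (carpetSec h (List.ofFn v)) : ℝ) ^ p := by
        refine Finset.sum_le_sum fun v hv => ?_
        have := (hh.carpetSec_ofFn v (Fintype.mem_piFinset.1 hv)).triadicLength_le
        gcongr
    _ ≤ ∑ v : Fin n → Fin 8, (carpetLength (carpetSec h (List.ofFn v)) : ℝ) ^ p :=
        Finset.sum_le_sum_of_subset_of_nonneg (Finset.subset_univ _) fun _ _ _ => by positivity
    _ ≤ (triadicLength (k + n) : ℝ) ^ p := hlen ▸ hm h hh.mem_carpetGroup (hlen ▸ hk)

theorem six_pow_pow_mul_triadicLength_rpow_le (hp : 0 < p) {K : ℕ}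
    (hK : ∀ k, K ≤ k → m ≤ triadicLength k) (j : ℕ) :
    ((6 : ℝ) ^ n) ^ j * (triadicLength K : ℝ) ^ p ≤
      (triadicLength (K + j * n) : ℝ) ^ p := by
  induction j with
  | zero => simp
  | succ j ih =>
    have hstep := six_pow_mul_triadicLength_rpow_le hm hp (k := K + j * n) (hK _ (by omega))
    rw [pow_succ, mul_right_comm, show K + (j + 1) * n = K + j * n + n by ring]
    exact (mul_le_mul_of_nonneg_right ih (by positivity)).trans (mul_comm (6 ^ n : ℝ) _ ▸ hstep)

end LowerBound

theorem le_of_forall_pow_le_mul_pow {a b C : ℝ} (ha : 0 ≤ a) (hb : 0 ≤ b)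
    (h : ∀ j : ℕ, a ^ j ≤ C * b ^ j) : a ≤ b := by
  by_contra! hlt
  have ha' : 0 < a := hb.trans_lt hlt
  have hlim : Tendsto (fun j : ℕ => C * (b / a) ^ j) atTop (𝓝 0) := by
    simpa using (tendsto_pow_atTop_nhds_zero_of_lt_one (div_nonneg hb ha)
      ((div_lt_one ha').2 hlt)).const_mul C
  obtain ⟨j, hj⟩ := (hlim.eventually (gt_mem_nhds zero_lt_one)).exists
  have : a ^ j ≤ C * (b / a) ^ j * a ^ j := by
    rw [div_pow, mul_assoc, div_mul_cancel₀ _ (pow_pos ha' j).ne']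
    exact h j
  nlinarith [pow_pos ha' j]

theorem six_le_three_rpow_of_carpetEta_lt_one {p : ℝ} (hp : 0 < p) {n : ℕ} (hn : 1 ≤ n)
    (h : carpetEta p n < 1) : 6 ≤ (3 : ℝ) ^ p := by
  obtain ⟨m, hm⟩ := exists_sum_rpow_le_of_carpetEta_lt_one hp h
  obtain ⟨K, hK⟩ := eventually_atTop.1 (tendsto_atTop.1 tendsto_triadicLength_atTop m)
  have hgeom : ∀ j : ℕ,
      ((6 : ℝ) ^ n) ^ j ≤ (2 * 3 ^ K : ℝ) ^ p * (((3 : ℝ) ^ p) ^ n) ^ j := by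
    intro j
    have hK1 : 1 ≤ (triadicLength K : ℝ) ^ p :=
      Real.one_le_rpow (by exact_mod_cast one_le_triadicLength K) hp.le
    have hupper : (triadicLength (K + j * n) : ℝ) ≤ 2 * 3 ^ (K + j * n) := by
      exact_mod_cast triadicLength_le _
    calc ((6 : ℝ) ^ n) ^ j ≤ ((6 : ℝ) ^ n) ^ j * (triadicLength K : ℝ) ^ p :=
          le_mul_of_one_le_right (by positivity) hK1
      _ ≤ (triadicLength (K + j * n) : ℝ) ^ p :=
          six_pow_pow_mul_triadicLength_rpow_le hm hp hK j
      _ ≤ (2 * 3 ^ (K + j * n) : ℝ) ^ p := by gcongr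
      _ = (2 * 3 ^ K * 3 ^ (n * j) : ℝ) ^ p := by rw [pow_add, mul_comm j n, mul_assoc]
      _ = (2 * 3 ^ K : ℝ) ^ p * (((3 : ℝ) ^ p) ^ n) ^ j := by
          rw [Real.mul_rpow (by positivity) (by positivity), ← Real.rpow_pow_comm (by norm_num),
            pow_mul]
  have := le_of_forall_pow_le_mul_pow (by positivity) (by positivity) hgeom
  rwa [pow_le_pow_iff_left₀ (by norm_num) (by positivity) (by omega)] at this

/-- Section 6.3. The critical exponent of the Sierpiński carpet group is
at least `log 6 / log 3`. -/
theorem carpet_critical_exponent_lower_bound :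
    Real.log 6 / Real.log 3 ≤
      sInf {p : ℝ | 0 < p ∧ ∃ n : ℕ, 1 ≤ n ∧ carpetEta p n < 1} := by
  refine le_csInf ⟨48, by norm_num, 1, le_rfl, carpetEta_48_one_lt_one⟩ ?_
  rintro p ⟨hp, n, hn, hη⟩
  rw [div_le_iff₀ (Real.log_pos (by norm_num))]
  calc Real.log 6 ≤ Real.log (3 ^ p) :=
        Real.log_le_log (by norm_num) (six_le_three_rpow_of_carpetEta_lt_one hp hn hη)
    _ = p * Real.log 3 := Real.log_rpow (by norm_num) p
end

section
/- Let G be a self-similar group over X, contracting with nucleus N, and let ρ be a pseudometric on Σ that is continuous with respect to the product topology and satisfies ρ(ξ,ζ) = 0 if and only if ξ ≈ ζ (so ρ encodes a metric on the limit space compatible with its topology). Then the diameters of the sets T(ξ,n) tend to 0 uniformly: sup_{ξ∈Σ} diam_ρ(T(ξ,n)) → 0 as n → ∞. (First statement of Proposition 3.6 of the paper.) -/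
open Filter Topology
open scoped ENNReal NNReal

/-- The truncation `ξ|_n = x_n … x₂ x₁ ∈ X^n` of a left-infinite sequence `ξ = …x₂x₁`,
encoded as `ξ : ℕ → X` with `x_k = ξ (k-1)` (index `0` is the rightmost letter). -/
def trunc {X : Type*} (ξ : ℕ → X) (n : ℕ) : List X :=
  (List.ofFn fun i : Fin n => ξ i).reverse

/-- The sequence `ξ⌢v` obtained from `ξ` by appending the finite word `v` on the right. -/
def appendWord {X : Type*} (ξ : ℕ → X) (v : List X) : ℕ → X := fun i =>
  if h : i < v.length then v.reverse.get ⟨i, by simpa using h⟩ else ξ (i - v.length)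

/-- Asymptotic equivalence of left-infinite sequences: `ξ ≈ ζ` iff for every `n` some element
of the nucleus maps `ξ|_n` to `ζ|_n`. -/
def AsympEquiv {X G : Type*} [Group G] (A : SelfSimilarGroup X G) (N : Finset G)
    (ξ ζ : ℕ → X) : Prop :=
  ∀ n : ℕ, ∃ g ∈ N, A.act g (trunc ξ n) = trunc ζ n

/-- `T(ζ,n)`: the set of sequences whose `n`-truncation is mapped to that of `ζ` by an
element of the nucleus. -/
def Tset {X G : Type*} [Group G] (A : SelfSimilarGroup X G) (N : Finset G)
    (ζ : ℕ → X) (n : ℕ) : Set (ℕ → X) :=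
  {ξ | ∃ g ∈ N, A.act g (trunc ξ n) = trunc ζ n}

/-- A pseudometric on `Σ = X^ℕ` encoding a metric on the limit space: continuous for the
product topology and vanishing exactly on asymptotically equivalent pairs. -/
structure LimitPseudoMetric {X G : Type*} [TopologicalSpace X] [Group G]
    (A : SelfSimilarGroup X G) (N : Finset G) where
  ρ : (ℕ → X) → (ℕ → X) → ℝ
  nonneg : ∀ ξ ζ, 0 ≤ ρ ξ ζ
  symm : ∀ ξ ζ, ρ ξ ζ = ρ ζ ξ
  triangle : ∀ ξ ζ θ, ρ ξ θ ≤ ρ ξ ζ + ρ ζ θ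
  eq_zero_iff : ∀ ξ ζ, ρ ξ ζ = 0 ↔ AsympEquiv A N ξ ζ
  cont : Continuous fun pq : (ℕ → X) × (ℕ → X) => ρ pq.1 pq.2


section Aux

lemma trunc_add' {X : Type*} (ξ : ℕ → X) (m d : ℕ) :
    trunc ξ (m + d) = (List.ofFn fun i : Fin d => ξ (m + i)).reverse ++ trunc ξ m := by
  simp [trunc, List.ofFn_add]

lemma act_inv_act {X G : Type*} [Group G] (A : SelfSimilarGroup X G) (g : G) (v : List X) :
    A.act g⁻¹ (A.act g v) = v := by
  rw [← A.act_mul, inv_mul_cancel, A.act_one]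

lemma trunc_eventually_eq {X : Type*} [TopologicalSpace X] [DiscreteTopology X]
    {u : ℕ → ℕ → X} {ζ : ℕ → X} (h : Filter.Tendsto u Filter.atTop (𝓝 ζ)) (m : ℕ) :
    ∀ᶠ k in Filter.atTop, trunc (u k) m = trunc ζ m := by
  have h' : ∀ i : ℕ, ∀ᶠ k in Filter.atTop, u k i = ζ i := by
    intro i
    have := tendsto_pi_nhds.mp h i
    simpa [nhds_discrete, tendsto_pure] using this
  have h2 : ∀ᶠ k in Filter.atTop, ∀ i ∈ Finset.range m, u k i = ζ i :=
    (Filter.eventually_all_finset _).mpr (fun i _ => h' i)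
  filter_upwards [h2] with k hk
  unfold trunc
  rw [show (fun i : Fin m => u k ↑i) = (fun i : Fin m => ζ ↑i) from
    funext fun i => hk i (Finset.mem_range.mpr i.isLt)]

lemma asympEquiv_of_seq {X G : Type*} [Group G]
    (A : SelfSimilarGroup X G) (N : Finset G) (hN : A.IsNucleus N)
    (nseq : ℕ → ℕ) (hnseq : ∀ k, k ≤ nseq k)
    (ξ ζ₁ ζ₂ : ℕ → ℕ → X) (ζ ζ' : ℕ → X)
    (h₁ : ∀ k, ζ₁ k ∈ Tset A N (ξ k) (nseq k))
    (h₂ : ∀ k, ζ₂ k ∈ Tset A N (ξ k) (nseq k))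
    (hc₁ : ∀ m, ∀ᶠ k in Filter.atTop, trunc (ζ₁ k) m = trunc ζ m)
    (hc₂ : ∀ m, ∀ᶠ k in Filter.atTop, trunc (ζ₂ k) m = trunc ζ' m) :
    AsympEquiv A N ζ ζ' := by
  intro m
  classical
  choose n₀f hn₀f using hN.2.2
  set F : Finset G := (N ×ˢ N).image (fun p => p.2⁻¹ * p.1) with hF
  set M := F.sup n₀f with hM
  obtain ⟨k₀, hk₀⟩ := Filter.eventually_atTop.mp ((hc₁ m).and (hc₂ m))
  set k := max k₀ (m + M) with hk
  obtain ⟨hk1, hk2⟩ := hk₀ k (le_max_left _ _)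
  have hkn : m + M ≤ nseq k := le_trans (le_max_right _ _) (hnseq k)
  set n := nseq k with hn
  set d := n - m with hd
  have hnd : n = m + d := by omega
  have hMd : M ≤ d := by omega
  obtain ⟨g₁, hg₁N, hg₁⟩ := h₁ k
  obtain ⟨g₂, hg₂N, hg₂⟩ := h₂ k
  set g : G := g₂⁻¹ * g₁ with hg
  have hgF : g ∈ F := by
    rw [hF]
    exact Finset.mem_image.mpr ⟨(g₁, g₂), Finset.mem_product.mpr ⟨hg₁N, hg₂N⟩, rfl⟩
  have hact : A.act g (trunc (ζ₁ k) n) = trunc (ζ₂ k) n := by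
    rw [hg, A.act_mul, hg₁, ← hg₂, act_inv_act]
  rw [hnd, trunc_add', trunc_add', hk1, hk2, A.act_append] at hact
  set w := (List.ofFn fun i : Fin d => ζ₁ k (m + i)).reverse with hw
  have hwlen : w.length = d := by simp [hw]
  have hlen : (A.act g w).length =
      ((List.ofFn fun i : Fin d => ζ₂ k (m + i)).reverse).length := by
    simp [A.length_act, hwlen]
  obtain ⟨-, h2⟩ := List.append_inj hact hlen
  exact ⟨A.sec g w, hn₀f g w (by rw [hwlen]; exact le_trans (Finset.le_sup hgF) hMd), h2⟩

end Aux

/-- Proposition 3.6, first part. If `G` is contracting with nucleus `N`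
and `ρ` is a continuous pseudometric on `Σ` vanishing exactly on asymptotically equivalent
pairs, then the diameters of the sets `T(ξ,n)` tend to `0` uniformly in `ξ`. -/
theorem diam_Tset_tendsto_zero {X G : Type*} [Fintype X] [Nonempty X]
    [TopologicalSpace X] [DiscreteTopology X] [Group G]
    (A : SelfSimilarGroup X G) (N : Finset G) (hN : A.IsNucleus N)
    (ρm : LimitPseudoMetric A N) :
    Tendsto
      (fun n : ℕ =>
        sSup {x : ℝ | ∃ ξ ζ₁ ζ₂ : ℕ → X,
          ζ₁ ∈ Tset A N ξ n ∧ ζ₂ ∈ Tset A N ξ n ∧ ρm.ρ ζ₁ ζ₂ = x})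
      atTop (𝓝 0) := by
  classical
  set S : ℕ → Set ℝ := fun n => {x : ℝ | ∃ ξ ζ₁ ζ₂ : ℕ → X,
      ζ₁ ∈ Tset A N ξ n ∧ ζ₂ ∈ Tset A N ξ n ∧ ρm.ρ ζ₁ ζ₂ = x} with hSdef
  have hx0 : ∀ n, (0 : ℝ) ∈ S n := by
    intro n
    set ζ0 : ℕ → X := fun _ => Classical.arbitrary X with hζ0
    have hmem : ∀ m : ℕ, ∃ g ∈ N, A.act g (trunc ζ0 m) = trunc ζ0 m :=
      fun m => ⟨1, hN.1, by rw [A.act_one]⟩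
    exact ⟨ζ0, ζ0, ζ0, hmem n, hmem n, (ρm.eq_zero_iff ζ0 ζ0).mpr hmem⟩
  obtain ⟨p, -, hC⟩ := isCompact_univ.exists_isMaxOn
    (Set.univ_nonempty (α := (ℕ → X) × (ℕ → X))) ρm.cont.continuousOn
  have hbdd : ∀ n, BddAbove (S n) := by
    intro n
    refine ⟨ρm.ρ p.1 p.2, ?_⟩
    rintro x ⟨ξ, ζ₁, ζ₂, -, -, rfl⟩
    exact hC (Set.mem_univ (ζ₁, ζ₂))
  have hkey : ∀ ε : ℝ, 0 < ε → ∀ᶠ n in atTop, ∀ x ∈ S n, x ≤ ε := by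
    intro ε hε
    by_contra hcon
    rw [Filter.not_eventually] at hcon
    have hcon' : ∃ᶠ n in atTop, ∃ ξ ζ₁ ζ₂ : ℕ → X,
        ζ₁ ∈ Tset A N ξ n ∧ ζ₂ ∈ Tset A N ξ n ∧ ε < ρm.ρ ζ₁ ζ₂ := by
      apply hcon.mono
      intro n hn
      push_neg at hn
      obtain ⟨x, ⟨ξ, ζ₁, ζ₂, h1, h2, hx⟩, hlt⟩ := hn
      exact ⟨ξ, ζ₁, ζ₂, h1, h2, hx ▸ hlt⟩
    obtain ⟨φ, hφ, hφP⟩ := Filter.extraction_of_frequently_atTop hcon'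
    choose ξs ζ₁s ζ₂s hT1 hT2 hgt using hφP
    obtain ⟨q, ψ, hψ, hconv⟩ := CompactSpace.tendsto_subseq
      (fun k => ((ζ₁s k, ζ₂s k) : (ℕ → X) × (ℕ → X)))
    have hc1 : Filter.Tendsto (fun k => ζ₁s (ψ k)) atTop (𝓝 q.1) :=
      (continuous_fst.tendsto q).comp hconv
    have hc2 : Filter.Tendsto (fun k => ζ₂s (ψ k)) atTop (𝓝 q.2) :=
      (continuous_snd.tendsto q).comp hconv
    have hAE : AsympEquiv A N q.1 q.2 :=
      asympEquiv_of_seq A N hN (fun k => φ (ψ k))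
        (fun k => le_trans hψ.le_apply hφ.le_apply)
        (fun k => ξs (ψ k)) (fun k => ζ₁s (ψ k)) (fun k => ζ₂s (ψ k)) q.1 q.2
        (fun k => hT1 (ψ k)) (fun k => hT2 (ψ k))
        (trunc_eventually_eq hc1) (trunc_eventually_eq hc2)
    have h0 : ρm.ρ q.1 q.2 = 0 := (ρm.eq_zero_iff _ _).mpr hAE
    have hlim : Filter.Tendsto (fun k => ρm.ρ (ζ₁s (ψ k)) (ζ₂s (ψ k))) atTop
        (𝓝 (ρm.ρ q.1 q.2)) := (ρm.cont.tendsto q).comp hconv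
    have hge : ε ≤ ρm.ρ q.1 q.2 :=
      ge_of_tendsto hlim (Filter.Eventually.of_forall fun k => (hgt (ψ k)).le)
    rw [h0] at hge
    linarith
  rw [tendsto_order]
  constructor
  · intro a ha
    exact Filter.Eventually.of_forall fun n =>
      lt_of_lt_of_le ha (le_csSup (hbdd n) (hx0 n))
  · intro a ha
    filter_upwards [hkey (a / 2) (by linarith)] with n hn
    exact lt_of_le_of_lt (csSup_le ⟨0, hx0 n⟩ hn) (by linarith)
end
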